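/- arXiv:2305.11563 — 2 statements merged into one kernel-verified Lean document; each statement's English description precedes it below -/
import Mathlib

section
/- No hyperdark ceer is computably bi-reducible with the word problem of an infinite finitely generated c.e. algebra of finite type. -/
/-- A relation on ℕ is c.e. -/
def CeRel (R : ℕ → ℕ → Prop) : Prop := REPred fun p : ℕ × ℕ => R p.1 p.2

/-- A ceer: a c.e. equivalence relation on ℕ. -/
def Ceer (R : ℕ → ℕ → Prop) : Prop := Equivalence R ∧ CeRel R

/-- Computable reducibility of equivalence relations on ℕ. -/
def Reduces (R S : ℕ → ℕ → Prop) : Prop :=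
  ∃ f : ℕ → ℕ, Computable f ∧ ∀ x y, R x y ↔ S (f x) (f y)

/-- A transversal: a set of pairwise inequivalent numbers. -/
def IsTransversal (R : ℕ → ℕ → Prop) (T : Set ℕ) : Prop :=
  ∀ x ∈ T, ∀ y ∈ T, x ≠ y → ¬ R x y

/-- The principal transversal: least elements of equivalence classes. -/
def principalTransversal (R : ℕ → ℕ → Prop) : Set ℕ := {x | ∀ y < x, ¬ R y x}

/-- R has infinitely many equivalence classes. -/
def InfiniteClasses (R : ℕ → ℕ → Prop) : Prop :=
  {s : Set ℕ | ∃ x, s = {y | R x y}}.Infinite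

/-- A set is hyperimmune iff it is infinite and no computable function majorizes
its principal function (Kuznecov–Medvedev–Uspenskii characterization). -/
def Hyperimmune (A : Set ℕ) : Prop :=
  A.Infinite ∧ ¬ ∃ g : ℕ → ℕ, Computable g ∧ ∀ n, Nat.nth (· ∈ A) n ≤ g n

/-- A ceer is hyperdark if it has infinitely many classes and
all its infinite transversals are hyperimmune. -/
def Hyperdark (R : ℕ → ℕ → Prop) : Prop :=
  Ceer R ∧ InfiniteClasses R ∧
    ∀ T : Set ℕ, IsTransversal R T → T.Infinite → Hyperimmune T

/-- A c.e. algebra of finite type: universe ℕ, finitely many uniformly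
computable operations (given on lists, with prescribed arities), and a ceer
congruence `R` (the word problem). -/
structure CEAlg where
  k : ℕ
  arity : Fin k → ℕ
  op : Fin k → List ℕ → ℕ
  R : ℕ → ℕ → Prop
  op_computable : ∀ i, Computable (op i)
  ceer : Ceer R
  congr : ∀ i (l l' : List ℕ), l.length = arity i →
    List.Forall₂ R l l' → R (op i l) (op i l')

/-- One step of closing a set under the operations of the algebra. -/
def CEAlg.step (A : CEAlg) (S : Set ℕ) : Set ℕ :=
  S ∪ {y | ∃ i l, l.length = A.arity i ∧ (∀ x ∈ l, x ∈ S) ∧ y = A.op i l}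

/-- The stages X_n of the subalgebra generated by X. -/
def CEAlg.gen (A : CEAlg) (X : Set ℕ) : ℕ → Set ℕ
  | 0 => X
  | n + 1 => A.step (A.gen X n)

/-- The universe of the subalgebra generated by X. -/
def CEAlg.closure (A : CEAlg) (X : Set ℕ) : Set ℕ := ⋃ n, A.gen X n

/-!
Let a finite set `X` generate `A`, with stages `X_n`. These are finite sets, computable
uniformly in `n`. If `X_{n+1}` met no `=_A`-class missed by `X_n`, then by the congruence
property no later stage would either, and `A` would have only finitely many classes. Hence
`X_n` meets at least `n + 1` classes, whose least elements lie below the computable bound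
`max X_n`. A reduction `f` of `=_A` to `R` is injective on these least elements and maps them
into a transversal `T` of `R`, so `T` has at least `n + 1` elements below the computable
bound `max {f y | y ≤ max X_n}`. Thus `T` is an infinite transversal that is not hyperimmune.
-/

namespace Computable

variable {α β σ : Type*} [Primcodable α] [Primcodable β] [Primcodable σ]

theorem nat_iterate {f : α → ℕ} {g : α → β} {h : α → β → β} (hf : Computable f)
    (hg : Computable g) (hh : Computable₂ h) : Computable fun a => (h a)^[f a] (g a) :=
  (nat_rec hf hg (hh.comp fst (snd.comp snd)).to₂).of_eq fun a => by
    induction f a <;> simp [*, -Function.iterate_succ, Function.iterate_succ']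

theorem list_map {f : α → List β} {g : α → β → σ} (hf : Computable f) (hg : Computable₂ g) :
    Computable fun a => (f a).map (g a) := by
  have hstep : Computable₂ fun a (p : ℕ × List σ) => p.2 ++ (((f a)[p.1]?).map (g a)).toList :=
    list_append.comp (snd.comp snd) <| Primrec.optionToList.to_comp.comp <|
      option_map (list_getElem?.comp (hf.comp fst) (fst.comp snd)) (hg.comp (fst.comp fst) snd)
  refine (nat_rec (list_length.comp hf) (const []) hstep).of_eq fun a => ?_
  suffices ∀ n, Nat.rec (motive := fun _ => List σ) []
      (fun n l => l ++ (((f a)[n]?).map (g a)).toList) n = ((f a).take n).map (g a) by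
    rw [this, List.take_length]
  intro n
  induction n with
  | zero => rfl
  | succ n ih => rw [List.take_add_one, List.map_append, ← ih, ← Option.toList_map]

end Computable

theorem List.mem_sections_replicate {α : Type*} {L l : List α} {a : ℕ} :
    l ∈ (List.replicate a L).sections ↔ l.length = a ∧ ∀ x ∈ l, x ∈ L := by
  rw [List.mem_sections]
  induction l generalizing a with
  | nil => cases a <;> simp
  | cons x l ih => cases a <;> simp [List.replicate_succ, ih, and_left_comm]

theorem Primrec.list_sections_replicate {α : Type*} [Primcodable α] (a : ℕ) :
    Primrec fun L : List α => (List.replicate a L).sections := by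
  induction a with
  | zero => exact const [[]]
  | succ a ih => exact list_flatMap ih (list_map fst (list_cons.comp snd (snd.comp fst)).to₂)

theorem Primrec.list_foldr_max : Primrec fun L : List ℕ => L.foldr max 0 :=
  list_foldr .id (const 0) (nat_max.comp (fst.comp snd) (snd.comp snd)).to₂

def maxUpTo (f : ℕ → ℕ) (B : ℕ) : ℕ := ((List.range (B + 1)).map f).foldr max 0

theorem le_maxUpTo {f : ℕ → ℕ} {x B : ℕ} (h : x ≤ B) : f x ≤ maxUpTo f B :=
  List.le_max_of_le' 0 (List.mem_map_of_mem (List.mem_range.2 (Nat.lt_succ_of_le h))) le_rfl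

theorem Computable.maxUpTo {f b : ℕ → ℕ} (hf : Computable f) (hb : Computable b) :
    Computable fun n => _root_.maxUpTo f (b n) :=
  Primrec.list_foldr_max.to_comp.comp <|
    list_map (Primrec.list_range.to_comp.comp (succ.comp hb)) (hf.comp snd).to₂

noncomputable def minRep (R : ℕ → ℕ → Prop) (x : ℕ) : ℕ := sInf {y | R x y}

namespace Equivalence

variable {R : ℕ → ℕ → Prop}

theorem rel_minRep (hR : Equivalence R) (x : ℕ) : R x (minRep R x) :=
  Nat.sInf_mem ⟨x, hR.refl x⟩

theorem minRep_le (hR : Equivalence R) (x : ℕ) : minRep R x ≤ x :=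
  Nat.sInf_le (hR.refl x)

theorem minRep_eq_minRep_iff (hR : Equivalence R) {x y : ℕ} :
    minRep R x = minRep R y ↔ R x y := by
  refine ⟨fun h => hR.trans (hR.rel_minRep x) (h ▸ hR.symm (hR.rel_minRep y)), fun h => ?_⟩
  exact congrArg sInf (Set.ext fun z => ⟨hR.trans (hR.symm h), hR.trans h⟩)

theorem minRep_mem_principalTransversal (hR : Equivalence R) (x : ℕ) :
    minRep R x ∈ principalTransversal R :=
  fun _ hy hyx => (Nat.sInf_le (hR.trans (hR.rel_minRep x) (hR.symm hyx))).not_gt hy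

theorem isTransversal_principalTransversal (hR : Equivalence R) :
    IsTransversal R (principalTransversal R) := by
  intro x hx y hy hne hxy
  rcases hne.lt_or_gt with h | h
  · exact hy x h hxy
  · exact hx y h (hR.symm hxy)

theorem infinite_range_minRep (hR : Equivalence R) (h : InfiniteClasses R) :
    (Set.range (minRep R)).Infinite := by
  refine fun hfin => h ((hfin.image fun p => {y | R p y}).subset ?_)
  rintro _ ⟨x, rfl⟩
  exact ⟨minRep R x, ⟨x, rfl⟩, Set.ext fun y =>
    ⟨hR.trans (hR.rel_minRep x), hR.trans (hR.symm (hR.rel_minRep x))⟩⟩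

end Equivalence

namespace IsTransversal

variable {S R : ℕ → ℕ → Prop} {f : ℕ → ℕ} {T : Set ℕ}

theorem image (hT : IsTransversal S T) (hf : ∀ x y, S x y ↔ R (f x) (f y)) :
    IsTransversal R (f '' T) := by
  rintro _ ⟨x, hx, rfl⟩ _ ⟨y, hy, rfl⟩ hne hxy
  exact hT x hx y hy (ne_of_apply_ne f hne) ((hf x y).2 hxy)

theorem injOn (hT : IsTransversal S T) (hS : ∀ x, S x x) (hf : ∀ x y, S x y ↔ R (f x) (f y)) :
    Set.InjOn f T := by
  intro x hx y hy hxy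
  by_contra hne
  exact hT x hx y hy hne ((hf x y).2 (hxy ▸ (hf x x).1 (hS x)))

theorem ncard_inter_Iic_le (hT : IsTransversal S T) (hS : ∀ x, S x x)
    (hf : ∀ x y, S x y ↔ R (f x) (f y)) (B : ℕ) :
    (T ∩ Set.Iic B).ncard ≤ (f '' T ∩ Set.Iic (maxUpTo f B)).ncard :=
  Set.ncard_le_ncard_of_injOn f (fun x hx => ⟨⟨x, hx.1, rfl⟩, le_maxUpTo hx.2⟩)
    ((hT.injOn hS hf).mono Set.inter_subset_left) ((Set.finite_Iic _).inter_of_right _)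

end IsTransversal

theorem Set.infinite_of_forall_lt_ncard_inter {T : Set ℕ} {S : ℕ → Set ℕ}
    (h : ∀ n, n < (T ∩ S n).ncard) : T.Infinite :=
  fun hT => (h T.ncard).not_ge (Set.ncard_le_ncard Set.inter_subset_left hT)

theorem Nat.nth_le_of_lt_ncard_inter_Iic {T : Set ℕ} {n m : ℕ}
    (h : n < (T ∩ Set.Iic m).ncard) : Nat.nth (· ∈ T) n ≤ m := by
  classical
  have hcount : (T ∩ Set.Iic m).ncard = Nat.count (· ∈ T) (m + 1) := by
    rw [Nat.count_eq_card_filter_range, ← Set.ncard_coe_finset]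
    congr 1
    ext x
    simp [and_comm]
  exact Nat.lt_succ_iff.1 (Nat.nth_lt_of_lt_count (hcount ▸ h))

theorem not_hyperimmune_of_lt_ncard_inter_Iic {T : Set ℕ} {g : ℕ → ℕ} (hg : Computable g)
    (h : ∀ n, n < (T ∩ Set.Iic (g n)).ncard) : ¬ Hyperimmune T :=
  fun hT => hT.2 ⟨g, hg, fun n => Nat.nth_le_of_lt_ncard_inter_Iic (h n)⟩

namespace CEAlg

variable (A : CEAlg)

def stepList (L : List ℕ) : List ℕ :=
  L ++ (List.ofFn fun i => (List.replicate (A.arity i) L).sections.map (A.op i)).flatten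

theorem mem_stepList {L : List ℕ} {y : ℕ} : y ∈ A.stepList L ↔ y ∈ A.step {x | x ∈ L} := by
  simp [stepList, step, List.mem_sections_replicate, eq_comm, and_assoc]

theorem computable_stepList : Computable A.stepList :=
  Computable.list_append.comp Computable.id <| Primrec.list_flatten.to_comp.comp <|
    Computable.list_ofFn fun i =>
      Computable.list_map (Primrec.list_sections_replicate _).to_comp
        ((A.op_computable i).comp Computable.snd).to₂

def genList (L : List ℕ) (n : ℕ) : List ℕ := A.stepList^[n] L

theorem setOf_mem_genList (L : List ℕ) (n : ℕ) :
    {y | y ∈ A.genList L n} = A.gen {x | x ∈ L} n := by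
  induction n with
  | zero => rfl
  | succ n ih =>
    ext y
    change y ∈ A.stepList^[n + 1] L ↔ _
    rw [Function.iterate_succ_apply', ← genList, mem_stepList, ih]
    rfl

theorem computable_genList (L : List ℕ) : Computable (A.genList L) :=
  Computable.nat_iterate .id (.const L) (A.computable_stepList.comp .snd).to₂

theorem gen_mono (X : Set ℕ) : Monotone (A.gen X) :=
  monotone_nat_of_le_succ fun _ => Set.subset_union_left

theorem gen_finite {X : Set ℕ} (hX : X.Finite) (n : ℕ) : (A.gen X n).Finite := by
  obtain ⟨s, rfl⟩ := hX.exists_finset_coe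
  have hL : {x | x ∈ s.toList} = (s : Set ℕ) := by ext; simp
  rw [← hL, ← setOf_mem_genList]
  exact List.finite_toSet _

theorem minRep_image_step_subset {S S' : Set ℕ} (h : minRep A.R '' S' ⊆ minRep A.R '' S) :
    minRep A.R '' A.step S' ⊆ minRep A.R '' A.step S := by
  have hR := A.ceer.1
  have hrep : ∀ x ∈ S', ∃ z ∈ S, A.R z x := fun x hx => by
    obtain ⟨z, hz, e⟩ := h ⟨x, hx, rfl⟩
    exact ⟨z, hz, hR.minRep_eq_minRep_iff.1 e⟩
  rintro _ ⟨y, hy | ⟨i, l, hlen, hl, rfl⟩, rfl⟩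
  · obtain ⟨z, hz, hzy⟩ := hrep y hy
    exact ⟨z, Or.inl hz, hR.minRep_eq_minRep_iff.2 hzy⟩
  · choose! c hcS hcR using hrep
    have hlen' : (l.map c).length = A.arity i := by rw [List.length_map, hlen]
    have hlc : List.Forall₂ A.R (l.map c) l :=
      List.forall₂_map_left_iff.2 (List.forall₂_same.2 fun x hx => hcR x (hl x hx))
    refine ⟨A.op i (l.map c), Or.inr ⟨i, l.map c, hlen', ?_, rfl⟩, ?_⟩
    · simpa using fun x hx => hcS x (hl x hx)
    · exact hR.minRep_eq_minRep_iff.2 (A.congr i _ _ hlen' hlc)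

theorem minRep_image_gen_subset_of_succ {X : Set ℕ} {n : ℕ}
    (h : minRep A.R '' A.gen X (n + 1) ⊆ minRep A.R '' A.gen X n) (m : ℕ) :
    minRep A.R '' A.gen X m ⊆ minRep A.R '' A.gen X n := by
  induction m with
  | zero => exact Set.image_mono (A.gen_mono X (Nat.zero_le n))
  | succ m ih => exact (A.minRep_image_step_subset ih).trans h

theorem minRep_image_gen_ssubset {X : Set ℕ} (hinf : InfiniteClasses A.R) (hX : X.Finite)
    (hgen : ∀ x, ∃ y ∈ A.closure X, A.R x y) (n : ℕ) :
    minRep A.R '' A.gen X n ⊂ minRep A.R '' A.gen X (n + 1) := by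
  have hR := A.ceer.1
  refine (Set.image_mono (A.gen_mono X n.le_succ)).ssubset_of_not_subset fun h => ?_
  refine hR.infinite_range_minRep hinf (((A.gen_finite hX n).image (minRep A.R)).subset ?_)
  rintro _ ⟨x, rfl⟩
  obtain ⟨y, hy, hxy⟩ := hgen x
  obtain ⟨m, hm⟩ := Set.mem_iUnion.1 hy
  rw [hR.minRep_eq_minRep_iff.2 hxy]
  exact A.minRep_image_gen_subset_of_succ h m ⟨y, hm, rfl⟩

theorem lt_ncard_minRep_image_gen {X : Set ℕ} (hinf : InfiniteClasses A.R) (hX : X.Finite)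
    (hXne : X.Nonempty) (hgen : ∀ x, ∃ y ∈ A.closure X, A.R x y) (n : ℕ) :
    n < (minRep A.R '' A.gen X n).ncard := by
  induction n with
  | zero => exact (Set.ncard_pos (hX.image _)).2 (hXne.image _)
  | succ n ih =>
    exact lt_of_le_of_lt ih (Set.ncard_lt_ncard (A.minRep_image_gen_ssubset hinf hX hgen n)
      ((A.gen_finite hX _).image _))

theorem exists_computable_lt_ncard_principalTransversal_inter_Iic (hinf : InfiniteClasses A.R)
    (hfg : ∃ X : Set ℕ, X.Finite ∧ X.Nonempty ∧ ∀ x, ∃ y ∈ A.closure X, A.R x y) :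
    ∃ b : ℕ → ℕ, Computable b ∧ ∀ n, n < (principalTransversal A.R ∩ Set.Iic (b n)).ncard := by
  obtain ⟨X, hX, hXne, hgen⟩ := hfg
  obtain ⟨s, rfl⟩ := hX.exists_finset_coe
  have hL : {x | x ∈ s.toList} = (s : Set ℕ) := by ext; simp
  refine ⟨fun n => (A.genList s.toList n).foldr max 0,
    Primrec.list_foldr_max.to_comp.comp (A.computable_genList _), fun n => ?_⟩
  refine (A.lt_ncard_minRep_image_gen hinf hX hXne hgen n).trans_le
    (Set.ncard_le_ncard ?_ ((Set.finite_Iic _).inter_of_right _))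
  rintro _ ⟨x, hx, rfl⟩
  rw [← hL, ← setOf_mem_genList] at hx
  exact ⟨A.ceer.1.minRep_mem_principalTransversal x,
    (A.ceer.1.minRep_le x).trans (List.le_max_of_le' 0 hx le_rfl)⟩

end CEAlg

/-- no hyperdark ceer is computably bi-reducible with the word
problem of an infinite finitely generated c.e. algebra of finite type. -/
theorem hyperdark_not_realized (R : ℕ → ℕ → Prop) (hR : Hyperdark R)
    (A : CEAlg) (hAinf : InfiniteClasses A.R)
    (hfg : ∃ X : Set ℕ, X.Finite ∧ X.Nonempty ∧
      ∀ n : ℕ, ∃ m ∈ A.closure X, A.R n m) :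
    ¬ (Reduces R A.R ∧ Reduces A.R R) := by
  rintro ⟨-, f, hf, hred⟩
  have hA := A.ceer.1
  have hT := hA.isTransversal_principalTransversal
  obtain ⟨b, hb, hbn⟩ := A.exists_computable_lt_ncard_principalTransversal_inter_Iic hAinf hfg
  have hcount : ∀ n, n < (f '' principalTransversal A.R ∩ Set.Iic (maxUpTo f (b n))).ncard :=
    fun n => (hbn n).trans_le (hT.ncard_inter_Iic_le hA.refl hred _)
  exact not_hyperimmune_of_lt_ncard_inter_Iic (hf.maxUpTo hb) hcount
    (hR.2.2 _ (hT.image hred) (Set.infinite_of_forall_lt_ncard_inter hcount))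
end

section
/- If R is a ceer satisfying R ≡_c R ⊕ Id_ω, then there exists a two-generator c.e. semigroup S such that the word problem =_S is computably bi-reducible with R. -/
/-- The free semigroup on the two generators a, b, realized as nonempty words:
a first letter together with the list of remaining letters
(`false` codes a, `true` codes b). -/
abbrev Word : Type := Bool × List Bool

instance : Mul Word := ⟨fun u v => (u.1, u.2 ++ v.1 :: v.2)⟩

instance : Semigroup Word :=
  { mul_assoc := by intro a b c; simp [HMul.hMul, Mul.mul] }

/-- The underlying list of letters of a word. -/
def wlist (u : Word) : List Bool := u.1 :: u.2

/-- `Subword y x`: y occurs as a (contiguous) subword of x. -/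
def Subword (y x : Word) : Prop :=
  ∃ p s : List Bool, wlist x = p ++ wlist y ++ s

/-- The coding word a b^i a. -/
def abia (i : ℕ) : Word := (false, List.replicate i true ++ [false])

/-- Words of the set C: coding words a b^i a, i ≠ 0. -/
def isCoding (u : Word) : Prop := ∃ i : ℕ, i ≠ 0 ∧ u = abia i

/-- Words of C₊ : words which properly contain a coding word as a subword. -/
def inCplus (u : Word) : Prop :=
  ¬ isCoding u ∧ ∃ i : ℕ, i ≠ 0 ∧ Subword (abia i) u

/-- Computable reducibility between equivalence relations on coded types. -/
def ReducesT {α β : Type} [Primcodable α] [Primcodable β]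
    (R : α → α → Prop) (S : β → β → Prop) : Prop :=
  ∃ f : α → β, Computable f ∧ ∀ x y, R x y ↔ S (f x) (f y)

/-- The uniform join of two equivalence relations on ℕ (evens code the first
relation, odds the second). -/
def rjoin (R S : ℕ → ℕ → Prop) : ℕ → ℕ → Prop := fun x y =>
  (∃ a b, x = 2 * a ∧ y = 2 * b ∧ R a b) ∨
  (∃ a b, x = 2 * a + 1 ∧ y = 2 * b + 1 ∧ S a b)

/-- The defining relations of the semigroup S(R). -/
def baseRel (R : ℕ → ℕ → Prop) : Word → Word → Prop := fun u v =>
  (∃ i j, R i j ∧ u = abia (i + 1) ∧ v = abia (j + 1)) ∨ (inCplus u ∧ inCplus v)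

/-- The word problem of S(R): the semigroup congruence generated by the
defining relations. -/
def wordProblemS (R : ℕ → ℕ → Prop) : Word → Word → Prop :=
  fun u v => conGen (baseRel R) u v

/-!
The congruence of `S(R)` is the kernel of a computable map `wordCode` into `R ⊕ Id_ω`: the
coding word `a b^(i+1) a` goes to the copy of `i` in `R`, the whole of `C₊` goes to a single
point of `Id_ω`, and every other word gets a point of `Id_ω` of its own. This kernel is a
congruence because a coding word has no coding subword other than itself, so a product one of
whose factors contains a coding word lies in `C₊`. Following `wordCode` by a reduction of
`R ⊕ Id_ω` to `R` reduces the congruence to `R` (and shows it is c.e.), while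
`n ↦ a b^(n+1) a` reduces `R` to it.
-/

theorem List.isInfix_iff_exists_lt_eq_take_drop {α : Type*} {l₁ l₂ : List α} :
    l₁ <:+: l₂ ↔ ∃ k < l₂.length + 1, l₁ = (l₂.drop k).take l₁.length := by
  constructor
  · rintro ⟨s, t, rfl⟩
    exact ⟨s.length, by simp, by simp⟩
  · rintro ⟨k, -, hk⟩
    exact List.infix_iff_prefix_suffix.2
      ⟨l₂.drop k, List.prefix_iff_eq_take.2 hk, List.drop_suffix k l₂⟩

theorem primrecRel_isInfix {α : Type*} [Primcodable α] [DecidableEq α] :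
    PrimrecRel fun l₁ l₂ : List α => l₁ <:+: l₂ := by
  have hk : PrimrecRel fun (k : ℕ) (p : List α × List α) =>
      p.1 = (p.2.drop k).take p.1.length :=
    Primrec.eq.comp (Primrec.fst.comp Primrec.snd)
      (Primrec.list_take.comp (Primrec.list_length.comp (Primrec.fst.comp Primrec.snd))
        (Primrec.list_drop.comp Primrec.fst (Primrec.snd.comp Primrec.snd)))
  refine (hk.exists_mem_list.comp
    (Primrec.list_range.comp (Primrec.succ.comp (Primrec.list_length.comp Primrec.snd)))
    Primrec.id).of_eq fun p => ?_
  simp [List.isInfix_iff_exists_lt_eq_take_drop]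

theorem PrimrecRel.exists_lt_of_primrec {β : Type*} [Primcodable β] {R : ℕ → β → Prop}
    (hR : PrimrecRel R) {f : β → ℕ} (hf : Primrec f) :
    PrimrecPred fun b => ∃ i < f b, R i b :=
  (hR.exists_mem_list.comp (Primrec.list_range.comp hf) Primrec.id).of_eq fun b => by simp

section rjoin

variable {R S : ℕ → ℕ → Prop} {a b : ℕ}

@[simp]
theorem rjoin_two_mul_two_mul : rjoin R S (2 * a) (2 * b) ↔ R a b := by
  simp only [rjoin]
  constructor
  · rintro (⟨a', b', ha, hb, h⟩ | ⟨a', b', ha, hb, -⟩)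
    · obtain rfl : a = a' := by omega
      obtain rfl : b = b' := by omega
      exact h
    · omega
  · exact fun h => Or.inl ⟨a, b, rfl, rfl, h⟩

@[simp]
theorem rjoin_two_mul_add_one : rjoin R S (2 * a + 1) (2 * b + 1) ↔ S a b := by
  simp only [rjoin]
  constructor
  · rintro (⟨a', b', ha, hb, -⟩ | ⟨a', b', ha, hb, h⟩)
    · omega
    · obtain rfl : a = a' := by omega
      obtain rfl : b = b' := by omega
      exact h
  · exact fun h => Or.inr ⟨a, b, rfl, rfl, h⟩

@[simp]
theorem not_rjoin_two_mul_two_mul_add_one : ¬ rjoin R S (2 * a) (2 * b + 1) := by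
  rintro (⟨_, _, -, _, -⟩ | ⟨_, _, _, -, -⟩) <;> omega

@[simp]
theorem not_rjoin_two_mul_add_one_two_mul : ¬ rjoin R S (2 * a + 1) (2 * b) := by
  rintro (⟨_, _, _, -, -⟩ | ⟨_, _, -, _, -⟩) <;> omega

theorem Equivalence.rjoin (hR : Equivalence R) (hS : Equivalence S) :
    Equivalence (rjoin R S) where
  refl x := by
    obtain ⟨a, rfl | rfl⟩ := Nat.even_or_odd' x
    · exact rjoin_two_mul_two_mul.2 (hR.refl a)
    · exact rjoin_two_mul_add_one.2 (hS.refl a)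
  symm := by
    rintro _ _ (⟨a, b, rfl, rfl, h⟩ | ⟨a, b, rfl, rfl, h⟩)
    · exact rjoin_two_mul_two_mul.2 (hR.symm h)
    · exact rjoin_two_mul_add_one.2 (hS.symm h)
  trans := by
    rintro _ _ z (⟨a, b, rfl, rfl, hab⟩ | ⟨a, b, rfl, rfl, hab⟩) hbz <;>
      obtain ⟨c, rfl | rfl⟩ := Nat.even_or_odd' z <;> simp only [rjoin_two_mul_two_mul,
        rjoin_two_mul_add_one, not_rjoin_two_mul_two_mul_add_one,
        not_rjoin_two_mul_add_one_two_mul] at hbz ⊢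
    · exact hR.trans hab hbz
    · exact hS.trans hab hbz

end rjoin

theorem wlist_mul (u v : Word) : wlist (u * v) = wlist u ++ wlist v := rfl

theorem length_wlist_abia (i : ℕ) : (wlist (abia i)).length = i + 2 := by simp [wlist, abia]

theorem primrec_abia : Primrec abia := by
  have hrep : Primrec fun n : ℕ => List.replicate n true :=
    (Primrec.list_map Primrec.list_range (Primrec.const true).to₂).of_eq fun n => by simp
  exact Primrec.pair (Primrec.const false)
    (Primrec.list_append.comp hrep (Primrec.const [false]))

theorem subword_iff_isInfix {y x : Word} : Subword y x ↔ wlist y <:+: wlist x := by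
  simp only [Subword, List.IsInfix, eq_comm]

instance (y x : Word) : Decidable (Subword y x) :=
  decidable_of_iff _ subword_iff_isInfix.symm

theorem Subword.refl (u : Word) : Subword u u := ⟨[], [], by simp⟩

theorem Subword.mul_left {y x : Word} (h : Subword y x) (w : Word) : Subword y (w * x) := by
  obtain ⟨p, s, h⟩ := h
  exact ⟨wlist w ++ p, s, by simp [wlist_mul, h]⟩

theorem Subword.mul_right {y x : Word} (h : Subword y x) (w : Word) : Subword y (x * w) := by
  obtain ⟨p, s, h⟩ := h
  exact ⟨p, s ++ wlist w, by simp [wlist_mul, h]⟩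

theorem Subword.lt_length_of_abia {i : ℕ} {u : Word} (h : Subword (abia i) u) :
    i < (wlist u).length := by
  have := (subword_iff_isInfix.1 h).length_le
  rw [length_wlist_abia] at this
  omega

theorem eq_nil_of_wlist_abia_eq {k i : ℕ} {p s : List Bool}
    (h : wlist (abia k) = p ++ wlist (abia i) ++ s) : p = [] ∧ s = [] := by
  have hcount := congrArg (List.count false) h
  simp only [wlist, abia, List.count_append, List.count_cons, List.count_replicate,
    List.count_nil, beq_self_eq_true, Bool.true_beq, Bool.false_eq_true, if_true, if_false]
    at hcount
  have hp : false ∉ p := List.count_eq_zero.1 (by omega)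
  have hs : false ∉ s := List.count_eq_zero.1 (by omega)
  constructor
  · rcases p with _ | ⟨b, p⟩
    · rfl
    · have hb : false = b := by simpa [wlist, abia] using congrArg List.head? h
      exact absurd (hb ▸ List.mem_cons_self) hp
  · obtain rfl | ⟨s, b, rfl⟩ := List.eq_nil_or_concat s
    · rfl
    · have hb : false = b := by
        simpa [wlist, abia] using congrArg (fun l => l.reverse.head?) h
      exact absurd (by simp [hb]) hs

def HasCodingSubword (u : Word) : Prop := ∃ i, i ≠ 0 ∧ Subword (abia i) u

theorem hasCodingSubword_of_isCoding {u : Word} (h : isCoding u) : HasCodingSubword u := by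
  obtain ⟨i, hi, rfl⟩ := h
  exact ⟨i, hi, Subword.refl _⟩

theorem hasCodingSubword_iff_exists_lt {u : Word} :
    HasCodingSubword u ↔ ∃ i < (wlist u).length, i ≠ 0 ∧ Subword (abia i) u :=
  ⟨fun ⟨i, hi, h⟩ => ⟨i, h.lt_length_of_abia, hi, h⟩, fun ⟨i, _, h⟩ => ⟨i, h⟩⟩

theorem isCoding_iff_exists_lt {u : Word} :
    isCoding u ↔ ∃ i < (wlist u).length, i ≠ 0 ∧ u = abia i := by
  constructor
  · rintro ⟨i, hi, rfl⟩
    exact ⟨i, (Subword.refl _).lt_length_of_abia, hi, rfl⟩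
  · rintro ⟨i, -, h⟩
    exact ⟨i, h⟩

instance : DecidablePred isCoding := fun _ => decidable_of_iff _ isCoding_iff_exists_lt.symm

instance : DecidablePred HasCodingSubword := fun _ =>
  decidable_of_iff _ hasCodingSubword_iff_exists_lt.symm

theorem primrecPred_isCoding : PrimrecPred isCoding := by
  have h : PrimrecRel fun (i : ℕ) (u : Word) => i ≠ 0 ∧ u = abia i :=
    (Primrec.eq.comp Primrec.fst (Primrec.const 0)).not.and
      (Primrec.eq.comp Primrec.snd (primrec_abia.comp Primrec.fst))
  exact (h.exists_lt_of_primrec (Primrec.list_length.comp (Primrec.list_cons.comp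
    Primrec.fst Primrec.snd))).of_eq fun u => isCoding_iff_exists_lt.symm

theorem primrecPred_hasCodingSubword : PrimrecPred HasCodingSubword := by
  have hwlist : Primrec wlist := Primrec.list_cons.comp Primrec.fst Primrec.snd
  have h : PrimrecRel fun (i : ℕ) (u : Word) => i ≠ 0 ∧ Subword (abia i) u :=
    (Primrec.eq.comp Primrec.fst (Primrec.const 0)).not.and
      ((primrecRel_isInfix.comp (hwlist.comp (primrec_abia.comp Primrec.fst))
        (hwlist.comp Primrec.snd)).of_eq fun _ => subword_iff_isInfix.symm)
  exact (h.exists_lt_of_primrec (Primrec.list_length.comp hwlist)).of_eq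
    fun u => hasCodingSubword_iff_exists_lt.symm

theorem HasCodingSubword.inCplus_mul_left {u : Word} (hu : HasCodingSubword u) (w : Word) :
    inCplus (w * u) := by
  obtain ⟨i, hi, p, s, hps⟩ := hu
  refine ⟨?_, i, hi, Subword.mul_left ⟨p, s, hps⟩ w⟩
  rintro ⟨k, -, hk⟩
  have h : wlist (abia k) = (wlist w ++ p) ++ wlist (abia i) ++ s := by
    rw [← hk, wlist_mul, hps]; simp
  simpa [wlist] using (eq_nil_of_wlist_abia_eq h).1

theorem HasCodingSubword.inCplus_mul_right {u : Word} (hu : HasCodingSubword u) (w : Word) :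
    inCplus (u * w) := by
  obtain ⟨i, hi, p, s, hps⟩ := hu
  refine ⟨?_, i, hi, Subword.mul_right ⟨p, s, hps⟩ w⟩
  rintro ⟨k, -, hk⟩
  have h : wlist (abia k) = p ++ wlist (abia i) ++ (s ++ wlist w) := by
    rw [← hk, wlist_mul, hps]; simp
  simpa [wlist] using (eq_nil_of_wlist_abia_eq h).2

def wordCode (u : Word) : ℕ :=
  if isCoding u then 2 * (u.2.length - 2)
  else 2 * (if HasCodingSubword u then 0 else Encodable.encode u + 1) + 1

theorem computable_wordCode : Computable wordCode := by
  refine (Primrec.ite primrecPred_isCoding ?_ ?_).to_comp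
  · exact Primrec.nat_mul.comp (Primrec.const 2)
      (Primrec.nat_sub.comp (Primrec.list_length.comp Primrec.snd) (Primrec.const 2))
  · refine Primrec.nat_add.comp (Primrec.nat_mul.comp (Primrec.const 2) ?_) (Primrec.const 1)
    exact Primrec.ite primrecPred_hasCodingSubword (Primrec.const 0)
      (Primrec.succ.comp Primrec.encode)

theorem wordCode_abia_succ (n : ℕ) : wordCode (abia (n + 1)) = 2 * n := by
  have h : isCoding (abia (n + 1)) := ⟨n + 1, n.succ_ne_zero, rfl⟩
  rw [wordCode, if_pos h]
  simp [abia]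

theorem wordCode_of_inCplus {u : Word} (hu : inCplus u) : wordCode u = 2 * 0 + 1 := by
  have hsub : HasCodingSubword u := hu.2
  simp [wordCode, hu.1, hsub]

section codingCon

variable {R : ℕ → ℕ → Prop}

theorem eq_or_hasCodingSubword_of_rjoin_wordCode {u v : Word}
    (h : rjoin R (· = ·) (wordCode u) (wordCode v)) :
    u = v ∨ HasCodingSubword u ∧ HasCodingSubword v := by
  unfold wordCode at h
  split_ifs at h <;>
    simp only [rjoin_two_mul_two_mul, rjoin_two_mul_add_one, not_rjoin_two_mul_two_mul_add_one,
      not_rjoin_two_mul_add_one_two_mul] at h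
  · exact Or.inr ⟨hasCodingSubword_of_isCoding ‹_›, hasCodingSubword_of_isCoding ‹_›⟩
  · exact Or.inr ⟨‹_›, ‹_›⟩
  · omega
  · omega
  · exact Or.inl (Encodable.encode_injective (by omega))

def codingCon (hR : Equivalence R) : Con Word where
  r u v := rjoin R (· = ·) (wordCode u) (wordCode v)
  iseqv :=
    have e := hR.rjoin eq_equivalence
    ⟨fun _ => e.refl _, e.symm, e.trans⟩
  mul' := by
    intro w x y z hwx hyz
    rcases eq_or_hasCodingSubword_of_rjoin_wordCode hwx with rfl | ⟨hw, hx⟩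
    · rcases eq_or_hasCodingSubword_of_rjoin_wordCode hyz with rfl | ⟨hy, hz⟩
      · exact (hR.rjoin eq_equivalence).refl _
      · rw [wordCode_of_inCplus (hy.inCplus_mul_left w),
          wordCode_of_inCplus (hz.inCplus_mul_left w), rjoin_two_mul_add_one]
    · rw [wordCode_of_inCplus (hw.inCplus_mul_right y),
        wordCode_of_inCplus (hx.inCplus_mul_right z), rjoin_two_mul_add_one]

end codingCon

theorem realized_by_two_generator_semigroup_general (R : ℕ → ℕ → Prop) (hR : Ceer R)
    (h2 : Reduces (rjoin R (· = ·)) R) :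
    ∃ c : Con Word, REPred (fun p : Word × Word => c p.1 p.2) ∧
      ReducesT (fun u v : Word => c u v) R ∧
      ReducesT R (fun u v : Word => c u v) := by
  obtain ⟨hEquiv, hCe⟩ := hR
  obtain ⟨g, hg, hgR⟩ := h2
  have hcode : Computable fun u => g (wordCode u) := hg.comp computable_wordCode
  refine ⟨codingCon hEquiv, ?_, ⟨_, hcode, fun u v => hgR _ _⟩,
    ⟨_, primrec_abia.to_comp.comp Computable.succ, fun n m => ?_⟩⟩
  · have hpre : REPred fun p : Word × Word => R (g (wordCode p.1)) (g (wordCode p.2)) :=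
      hCe.comp ((hcode.comp Computable.fst).pair (hcode.comp Computable.snd))
    exact hpre.of_eq fun p => (hgR _ _).symm
  · show R n m ↔ rjoin R (· = ·) (wordCode (abia (n + 1))) (wordCode (abia (m + 1)))
    rw [wordCode_abia_succ, wordCode_abia_succ, rjoin_two_mul_two_mul]

/-- if R ≡_c R ⊕ Id_ω then R is c-realized by a two-generator
c.e. semigroup, i.e. by a congruence on the free semigroup on two generators
whose graph is c.e. -/
theorem realized_by_two_generator_semigroup (R : ℕ → ℕ → Prop) (hR : Ceer R)
    (h1 : Reduces R (rjoin R (· = ·))) (h2 : Reduces (rjoin R (· = ·)) R) :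
    ∃ c : Con Word, REPred (fun p : Word × Word => c p.1 p.2) ∧
      ReducesT (fun u v : Word => c u v) R ∧
      ReducesT R (fun u v : Word => c u v) :=
  realized_by_two_generator_semigroup_general R hR h2
end
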